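/- Let M be a finitely generated graded module of projective dimension p over the standard graded polynomial ring S = k[x_1,…,x_n], and suppose f is a nonzero homogeneous element of Ann(M) of degree d. Then reg(M) ≤ max{ max_{0 ≤ i ≤ p−1} { T_i(M) − i }, T_{p−1}(M) + d − p }. -/

import Mathlib

open MvPolynomial

/-- The degree-`d` homogeneous piece of the standard graded polynomial ring
`S = k[x_1,…,x_n]` (each variable of degree one), with pieces indexed by `ℤ`
(zero in negative degrees). -/
noncomputable def polyPiece (k : Type) [Field k] (n : ℕ) (d : ℤ) :
    Submodule k (MvPolynomial (Fin n) k) :=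
  if 0 ≤ d then MvPolynomial.homogeneousSubmodule (Fin n) k d.toNat else ⊥

/-- The irrelevant maximal ideal `(x_1,…,x_n)` of `S = k[x_1,…,x_n]`. -/
noncomputable def maxIdeal (k : Type) [Field k] (n : ℕ) : Ideal (MvPolynomial (Fin n) k) :=
  Ideal.span (Set.range MvPolynomial.X)

/-- The degree-`d` piece of the graded free module `⊕_{t : ι} S(-dg t)`,
realized concretely as `ι →₀ S`. -/
noncomputable def freePiece (k : Type) [Field k] (n : ℕ) {ι : Type} (dg : ι → ℤ) (d : ℤ) :
    Submodule k (ι →₀ MvPolynomial (Fin n) k) :=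
  ⨅ t : ι, (polyPiece k n (d - dg t)).comap
    ((Finsupp.lapply t : (ι →₀ MvPolynomial (Fin n) k) →ₗ[MvPolynomial (Fin n) k]
        MvPolynomial (Fin n) k).restrictScalars k)

/-- `piece` is a grading on the `S`-module `M`, making `M` a graded `S`-module. -/
structure IsGrading (k : Type) [Field k] (n : ℕ) (M : Type) [AddCommGroup M]
    [Module (MvPolynomial (Fin n) k) M] [Module k M]
    [IsScalarTower k (MvPolynomial (Fin n) k) M]
    (piece : ℤ → Submodule k M) : Prop where
  internal : DirectSum.IsInternal piece
  smul_mem : ∀ (i : ℕ) (d : ℤ) ⦃s : MvPolynomial (Fin n) k⦄,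
      s ∈ MvPolynomial.homogeneousSubmodule (Fin n) k i →
      ∀ ⦃m : M⦄, m ∈ piece d → s • m ∈ piece ((i : ℤ) + d)

/-- A minimal graded free resolution `⋯ → F_1 → F_0 → M → 0` of the graded
`S`-module `M` (with grading `piece`), where `F_i = ⊕_{t : ι i} S(-dg i t)` is
realized as `ι i →₀ S`.  All the `ι i` are finite, so `M` is finitely generated. -/
structure MinFreeRes (k : Type) [Field k] (n : ℕ) (M : Type) [AddCommGroup M]
    [Module (MvPolynomial (Fin n) k) M] [Module k M]
    [IsScalarTower k (MvPolynomial (Fin n) k) M]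
    (piece : ℤ → Submodule k M) where
  ι : ℕ → Type
  fin : ∀ i, Fintype (ι i)
  dg : ∀ i, ι i → ℤ
  diff : ∀ i, (ι (i + 1) →₀ MvPolynomial (Fin n) k) →ₗ[MvPolynomial (Fin n) k]
      (ι i →₀ MvPolynomial (Fin n) k)
  aug : (ι 0 →₀ MvPolynomial (Fin n) k) →ₗ[MvPolynomial (Fin n) k] M
  aug_surjective : Function.Surjective aug
  ker_aug : LinearMap.ker aug = LinearMap.range (diff 0)
  exact : ∀ i, LinearMap.ker (diff i) = LinearMap.range (diff (i + 1))
  diff_graded : ∀ i (d : ℤ) x, x ∈ freePiece k n (dg (i + 1)) d →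
      diff i x ∈ freePiece k n (dg i) d
  aug_graded : ∀ (d : ℤ) x, x ∈ freePiece k n (dg 0) d → aug x ∈ piece d
  minimal : ∀ i, LinearMap.range (diff i) ≤
      maxIdeal k n • (⊤ : Submodule (MvPolynomial (Fin n) k)
        (ι i →₀ MvPolynomial (Fin n) k))

namespace MinFreeRes

variable {k : Type} [Field k] {n : ℕ} {M : Type} [AddCommGroup M]
  [Module (MvPolynomial (Fin n) k) M] [Module k M]
  [IsScalarTower k (MvPolynomial (Fin n) k) M] {piece : ℤ → Submodule k M}

/-- The resolution has length exactly `p`; equivalently, `pd_S M = p`. -/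
def lengthEq (R : MinFreeRes k n M piece) (p : ℕ) : Prop :=
  Nonempty (R.ι p) ∧ ∀ i, p < i → IsEmpty (R.ι i)

/-- The `i`-th maximal graded shift `T_i(M)`: the largest degree of a generator of
the `i`-th term of the minimal graded free resolution of `M` (equivalently, the top
degree of `Tor_i^S(M,k)`), and `⊥` if that term vanishes. -/
noncomputable def T (R : MinFreeRes k n M piece) (i : ℕ) : WithBot ℤ :=
  letI := R.fin i
  (Finset.univ : Finset (R.ι i)).sup fun t => ((R.dg i t : ℤ) : WithBot ℤ)

/-- The Castelnuovo–Mumford regularity `reg M = max_{0 ≤ i ≤ p} (T_i(M) - i)`,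
where `p = pd M`. -/
noncomputable def reg (R : MinFreeRes k n M piece) (p : ℕ) : WithBot ℤ :=
  (Finset.range (p + 1)).sup fun i => R.T i + ((-(i : ℤ) : ℤ) : WithBot ℤ)

end MinFreeRes

/-- The canonical degree-`d` graded piece of `S/I`. -/
noncomputable def quotPiece (k : Type) [Field k] (n : ℕ) (I : Ideal (MvPolynomial (Fin n) k))
    (d : ℤ) : Submodule k (MvPolynomial (Fin n) k ⧸ I) :=
  (polyPiece k n d).map (Ideal.Quotient.mkₐ k I).toLinearMap

/-- `I` is a homogeneous ideal of `S = k[x_1,…,x_n]` for the standard grading. -/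
def IsHomogeneousIdeal (k : Type) [Field k] (n : ℕ)
    (I : Ideal (MvPolynomial (Fin n) k)) : Prop :=
  ∀ f ∈ I, ∀ d : ℕ, MvPolynomial.homogeneousComponent d f ∈ I

/-- The depth of `M` (w.r.t. the homogeneous maximal ideal): the supremum of the
lengths of `M`-regular sequences contained in `(x_1,…,x_n)`. -/
noncomputable def moduleDepth (k : Type) [Field k] (n : ℕ) (M : Type) [AddCommGroup M]
    [Module (MvPolynomial (Fin n) k) M] : ℕ∞ :=
  sSup {r : ℕ∞ | ∃ L : List (MvPolynomial (Fin n) k), (L.length : ℕ∞) = r ∧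
    (∀ f ∈ L, f ∈ maxIdeal k n) ∧ RingTheory.Sequence.IsRegular M L}

/-- The Krull dimension of the module `M`, i.e. `dim (S / ann M)`. -/
noncomputable def moduleDim (k : Type) [Field k] (n : ℕ) (M : Type) [AddCommGroup M]
    [Module (MvPolynomial (Fin n) k) M] : WithBot ℕ∞ :=
  ringKrullDim (MvPolynomial (Fin n) k ⧸ Module.annihilator (MvPolynomial (Fin n) k) M)

/-!
Since `f` annihilates `M`, multiplication by `f` on the minimal resolution `F` is
null-homotopic, `f = ∂h + h∂`, with `h` merely `S`-linear. As `F_{p+1} = 0`, on `F_p` this reads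
`f • x = h (∂ x)`. Take a basis vector `e_t` of `F_p` of degree `D`: the coordinates of `∂ e_t` are
homogeneous of degrees `D - deg e_s`. If all these exceeded `d`, the degree-`d` component of the
`t`-th coordinate of `h (∂ e_t)` would vanish, while it equals `f ≠ 0`. Hence `T_p ≤ T_{p-1} + d`,
which is exactly what the regularity bound needs.
-/

namespace MvPolynomial

attribute [local instance] MvPolynomial.gradedAlgebra

theorem homogeneousComponent_mul_eq_zero_of_lt {σ R : Type*} [CommSemiring R] {m d : ℕ}
    {c : MvPolynomial σ R} (hc : c ∈ homogeneousSubmodule σ R m) (hd : d < m)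
    (g : MvPolynomial σ R) : homogeneousComponent d (c * g) = 0 := by
  rw [← decomposition.decompose'_apply]
  exact DirectSum.coe_decompose_mul_of_left_mem_of_not_le _ hc (by omega)

end MvPolynomial

theorem LinearMap.exists_comp_eq_of_range_le {R M N P : Type*} [Ring R] [AddCommGroup M]
    [AddCommGroup N] [AddCommGroup P] [Module R M] [Module R N] [Module R P]
    [Module.Projective R P] (D : M →ₗ[R] N) (ψ : P →ₗ[R] N) (h : range ψ ≤ range D) :
    ∃ g : P →ₗ[R] M, D ∘ₗ g = ψ := by
  obtain ⟨g, hg⟩ := Module.projective_lifting_property D.rangeRestrict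
    (ψ.codRestrict (range D) fun x => h ⟨x, rfl⟩) D.surjective_rangeRestrict
  exact ⟨g, by ext x; exact congr(($hg x : N))⟩

section GradedPieces

variable {k : Type} [Field k] {n : ℕ}

theorem homogeneousComponent_mul_eq_zero_of_mem_polyPiece {m : ℤ} {d : ℕ}
    {c : MvPolynomial (Fin n) k} (hc : c ∈ polyPiece k n m) (hd : (d : ℤ) < m)
    (g : MvPolynomial (Fin n) k) : homogeneousComponent d (c * g) = 0 := by
  rw [polyPiece, if_pos (by omega)] at hc
  exact homogeneousComponent_mul_eq_zero_of_lt hc (by omega) g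

theorem mem_freePiece_iff {ι : Type} {dg : ι → ℤ} {e : ℤ} {x : ι →₀ MvPolynomial (Fin n) k} :
    x ∈ freePiece k n dg e ↔ ∀ t, x t ∈ polyPiece k n (e - dg t) := by
  simp [freePiece, Submodule.mem_iInf, Submodule.mem_comap]

theorem single_one_mem_freePiece {ι : Type} (dg : ι → ℤ) (s : ι) :
    Finsupp.single s (1 : MvPolynomial (Fin n) k) ∈ freePiece k n dg (dg s) := by
  rw [mem_freePiece_iff]
  intro t
  rcases eq_or_ne s t with rfl | h
  · simp only [Finsupp.single_eq_same, sub_self, polyPiece, if_pos le_rfl]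
    exact isHomogeneous_one _ _
  · rw [Finsupp.single_eq_of_ne' h]
    exact zero_mem _

theorem homogeneousComponent_map_apply_eq_zero {ι κ : Type} [Fintype ι]
    (h : (ι →₀ MvPolynomial (Fin n) k) →ₗ[MvPolynomial (Fin n) k] (κ →₀ MvPolynomial (Fin n) k))
    {dg : ι → ℤ} {e : ℤ} {y : ι →₀ MvPolynomial (Fin n) k} (hy : y ∈ freePiece k n dg e)
    {d : ℕ} (hgap : ∀ s, (d : ℤ) + dg s < e) (t : κ) :
    homogeneousComponent d (h y t) = 0 := by
  rw [← y.univ_sum_single, map_sum, Finsupp.finsetSum_apply, map_sum]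
  refine Finset.sum_eq_zero fun s _ => ?_
  rw [← Finsupp.smul_single_one, map_smul, Finsupp.smul_apply, smul_eq_mul]
  exact homogeneousComponent_mul_eq_zero_of_mem_polyPiece (mem_freePiece_iff.mp hy s)
    (by linarith [hgap s]) _

end GradedPieces

namespace MinFreeRes

variable {k : Type} [Field k] {n : ℕ} {M : Type} [AddCommGroup M]
  [Module (MvPolynomial (Fin n) k) M] [Module k M]
  [IsScalarTower k (MvPolynomial (Fin n) k) M] {piece : ℤ → Submodule k M}
  (R : MinFreeRes k n M piece)

theorem diff_diff (i : ℕ) (x : R.ι (i + 2) →₀ MvPolynomial (Fin n) k) :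
    R.diff i (R.diff (i + 1) x) = 0 := by
  have hx : R.diff (i + 1) x ∈ LinearMap.ker (R.diff i) := R.exact i ▸ ⟨x, rfl⟩
  exact hx

/-- `f - h ∘ ∂` maps `F_{i+1}` into the cycles: the form of `f = ∂h + h∂` that the induction
carries. -/
theorem exists_homotopy_smul {f : MvPolynomial (Fin n) k}
    (hf : f ∈ Module.annihilator (MvPolynomial (Fin n) k) M) (i : ℕ) :
    ∃ h : (R.ι i →₀ MvPolynomial (Fin n) k) →ₗ[MvPolynomial (Fin n) k]
        (R.ι (i + 1) →₀ MvPolynomial (Fin n) k),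
      ∀ x, R.diff i (f • x - h (R.diff i x)) = 0 := by
  induction i with
  | zero =>
    obtain ⟨h, hh⟩ := (R.diff 0).exists_comp_eq_of_range_le (f • LinearMap.id) (by
      rintro _ ⟨x, rfl⟩
      rw [← R.ker_aug, LinearMap.mem_ker, LinearMap.smul_apply, LinearMap.id_apply, map_smul,
        Module.mem_annihilator.mp hf])
    refine ⟨h, fun x => ?_⟩
    rw [map_sub, ← LinearMap.comp_apply (R.diff 0) h, hh, map_smul]
    simp
  | succ i ih =>
    obtain ⟨h, hh⟩ := ih
    obtain ⟨h', hh'⟩ := (R.diff (i + 1)).exists_comp_eq_of_range_le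
      (f • LinearMap.id - h ∘ₗ R.diff i) (by
        rintro _ ⟨x, rfl⟩
        rw [← R.exact i]
        exact hh x)
    refine ⟨h', fun x => ?_⟩
    rw [map_sub, ← LinearMap.comp_apply (R.diff (i + 1)) h', hh', map_smul]
    simp [R.diff_diff]

variable {R}

theorem exists_dg_le_of_isEmpty {f : MvPolynomial (Fin n) k} (hf0 : f ≠ 0) {d : ℕ}
    (hfhom : f ∈ homogeneousSubmodule (Fin n) k d)
    (hfann : f ∈ Module.annihilator (MvPolynomial (Fin n) k) M) {i : ℕ}
    (hempty : IsEmpty (R.ι (i + 2))) (t : R.ι (i + 1)) :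
    ∃ s, R.dg (i + 1) t ≤ R.dg i s + d := by
  let _ := R.fin i
  obtain ⟨h, hh⟩ := R.exists_homotopy_smul hfann i
  have hsmul : ∀ x, f • x = h (R.diff i x) := fun x => by
    obtain ⟨y, hy⟩ : f • x - h (R.diff i x) ∈ LinearMap.range (R.diff (i + 1)) := by
      rw [← R.exact i]
      exact hh x
    rw [Subsingleton.elim y 0, map_zero] at hy
    exact sub_eq_zero.mp hy.symm
  by_contra! hgap
  apply hf0
  have hcomp := congr(homogeneousComponent d ($(hsmul (Finsupp.single t 1)) t))
  rw [homogeneousComponent_map_apply_eq_zero h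
    (R.diff_graded i _ _ (single_one_mem_freePiece _ t)) (fun s => by linarith [hgap s])] at hcomp
  simpa [homogeneousComponent_of_mem hfhom] using hcomp

theorem T_succ_le_of_isEmpty {f : MvPolynomial (Fin n) k} (hf0 : f ≠ 0) {d : ℕ}
    (hfhom : f ∈ homogeneousSubmodule (Fin n) k d)
    (hfann : f ∈ Module.annihilator (MvPolynomial (Fin n) k) M) {i : ℕ}
    (hempty : IsEmpty (R.ι (i + 2))) :
    R.T (i + 1) ≤ R.T i + ((d : ℤ) : WithBot ℤ) := by
  let _ := R.fin i
  refine Finset.sup_le fun t _ => ?_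
  obtain ⟨s, hs⟩ := exists_dg_le_of_isEmpty hf0 hfhom hfann hempty t
  calc (R.dg (i + 1) t : WithBot ℤ)
      ≤ (R.dg i s : WithBot ℤ) + ((d : ℤ) : WithBot ℤ) := by exact_mod_cast hs
    _ ≤ R.T i + ((d : ℤ) : WithBot ℤ) := by
        gcongr
        exact Finset.le_sup (f := fun s => (R.dg i s : WithBot ℤ)) (Finset.mem_univ s)

theorem reg_le_max_of_T_le {p d : ℕ} (hT : R.T p ≤ R.T (p - 1) + ((d : ℤ) : WithBot ℤ)) :
    R.reg p ≤ max
      ((Finset.range p).sup fun i => R.T i + ((-(i : ℤ) : ℤ) : WithBot ℤ))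
      (R.T (p - 1) + (((d : ℤ) - (p : ℤ) : ℤ) : WithBot ℤ)) := by
  rw [reg, Finset.range_add_one, Finset.sup_insert, sup_comm]
  refine max_le_max le_rfl ?_
  calc R.T p + ((-(p : ℤ) : ℤ) : WithBot ℤ)
      ≤ R.T (p - 1) + ((d : ℤ) : WithBot ℤ) + ((-(p : ℤ) : ℤ) : WithBot ℤ) := by gcongr
    _ = R.T (p - 1) + (((d : ℤ) - (p : ℤ) : ℤ) : WithBot ℤ) := by
        rw [add_assoc, ← WithBot.coe_add, ← sub_eq_add_neg]

end MinFreeRes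

theorem stmt8_general (k : Type) [Field k] (n : ℕ)
    (M : Type) [AddCommGroup M] [Module (MvPolynomial (Fin n) k) M] [Module k M]
    [IsScalarTower k (MvPolynomial (Fin n) k) M]
    (pM : ℤ → Submodule k M)
    (RM : MinFreeRes k n M pM) (p : ℕ) (hp : RM.lengthEq p)
    (f : MvPolynomial (Fin n) k) (hf0 : f ≠ 0) (d : ℕ)
    (hfhom : f ∈ MvPolynomial.homogeneousSubmodule (Fin n) k d)
    (hfann : f ∈ Module.annihilator (MvPolynomial (Fin n) k) M) :
    RM.reg p ≤ max
      ((Finset.range p).sup fun i => RM.T i + ((-(i : ℤ) : ℤ) : WithBot ℤ))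
      (RM.T (p - 1) + (((d : ℤ) - (p : ℤ) : ℤ) : WithBot ℤ)) := by
  refine MinFreeRes.reg_le_max_of_T_le ?_
  cases p with
  -- `0 - 1 = 0` in `ℕ`, so for `p = 0` the required bound `T 0 ≤ T 0 + d` is trivial.
  | zero => exact le_add_of_nonneg_right (by exact_mod_cast d.cast_nonneg)
  | succ q => exact MinFreeRes.T_succ_le_of_isEmpty hf0 hfhom hfann (hp.2 (q + 2) (by omega))

/-- If `M` is a finitely generated graded `S`-module of projective
dimension `p` and `f` is a nonzero homogeneous element of `Ann M` of degree `d`,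
then `reg M ≤ max { max_{0 ≤ i ≤ p-1} (T_i(M) - i), T_{p-1}(M) + d - p }`. -/
theorem stmt8 (k : Type) [Field k] (n : ℕ)
    (M : Type) [AddCommGroup M] [Module (MvPolynomial (Fin n) k) M] [Module k M]
    [IsScalarTower k (MvPolynomial (Fin n) k) M]
    (pM : ℤ → Submodule k M) (hgrM : IsGrading k n M pM)
    (RM : MinFreeRes k n M pM) (p : ℕ) (hp : RM.lengthEq p)
    (f : MvPolynomial (Fin n) k) (hf0 : f ≠ 0) (d : ℕ)
    (hfhom : f ∈ MvPolynomial.homogeneousSubmodule (Fin n) k d)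
    (hfann : f ∈ Module.annihilator (MvPolynomial (Fin n) k) M) :
    RM.reg p ≤ max
      ((Finset.range p).sup fun i => RM.T i + ((-(i : ℤ) : ℤ) : WithBot ℤ))
      (RM.T (p - 1) + (((d : ℤ) - (p : ℤ) : ℤ) : WithBot ℤ)) :=
  stmt8_general k n M pM RM p hp f hf0 d hfhom hfann
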